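/- Let (X, μ) be a finite measure space and let ρ₁, ..., ρₙ : X → ℝ be continuous (or measurable) positive functions with (∫ ρ₁⋯ρₙ dμ)ⁿ = (∫ ρ₁ⁿ dμ)⋯(∫ ρₙⁿ dμ). If all integrals are positive and finite, then the functions are pairwise proportional: for each i, j there exists a constant c > 0 with ρᵢ = c·ρⱼ μ-almost everywhere. -/

import Mathlib

/-!
After rescaling each `ρ i` by `c i = (∫ ρ i ^ n)^(1/n)`, all `∫ (ρ i / c i) ^ n` equal `1` and the
equality hypothesis says `∫ ∏ (ρ i / c i) = 1`. Pointwise AM–GM gives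
`∏ (ρ i / c i) ≤ (∑ (ρ i / c i) ^ n) / n`, and both sides have integral `1`, so the nonnegative
defect vanishes a.e. The equality case of AM–GM then forces the `ρ i / c i` to coincide a.e.
-/

open MeasureTheory Finset

namespace Real

variable {ι : Type*} [Fintype ι] [Nonempty ι] {z : ι → ℝ}

private lemma sum_one_div_card : ∑ _i : ι, (1 / Fintype.card ι : ℝ) = 1 := by
  simp [card_univ]

private lemma prod_pow_card_rpow_one_div_card (hz : ∀ i, 0 ≤ z i) :
    ∏ i, (z i ^ Fintype.card ι) ^ (1 / Fintype.card ι : ℝ) = ∏ i, z i :=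
  prod_congr rfl fun i _ => by
    rw [← rpow_natCast, ← rpow_mul (hz i), mul_one_div_cancel (by positivity), rpow_one]

theorem prod_le_sum_pow_card_div_card (hz : ∀ i, 0 ≤ z i) :
    ∏ i, z i ≤ (∑ i, z i ^ Fintype.card ι) / Fintype.card ι := by
  have := geom_mean_le_arith_mean_weighted univ (fun _ => (1 / Fintype.card ι : ℝ))
    (fun i => z i ^ Fintype.card ι) (fun _ _ => by positivity) sum_one_div_card
    (fun i _ => pow_nonneg (hz i) _)
  rwa [prod_pow_card_rpow_one_div_card hz, ← mul_sum, one_div_mul_eq_div] at this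

theorem prod_eq_sum_pow_card_div_card_iff (hz : ∀ i, 0 ≤ z i) :
    ∏ i, z i = (∑ i, z i ^ Fintype.card ι) / Fintype.card ι ↔ ∀ j k, z j = z k := by
  have := geom_mean_eq_arith_mean_weighted_iff_of_pos univ (fun _ => (1 / Fintype.card ι : ℝ))
    (fun i => z i ^ Fintype.card ι) (fun _ _ => by positivity) sum_one_div_card
    (fun i _ => pow_nonneg (hz i) _)
  rw [prod_pow_card_rpow_one_div_card hz, ← mul_sum, one_div_mul_eq_div] at this
  simpa [pow_left_inj₀ (hz _) (hz _) Fintype.card_ne_zero] using this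

end Real

theorem ae_forall_eq_of_integral_prod_eq_mean_integral_pow {X ι : Type*} [MeasurableSpace X]
    {μ : Measure X} [Fintype ι] [Nonempty ι] {g : ι → X → ℝ} (hg : ∀ i x, 0 ≤ g i x)
    (hgn : ∀ i, Integrable (fun x => g i x ^ Fintype.card ι) μ)
    (hprod : Integrable (fun x => ∏ i, g i x) μ)
    (heq : ∫ x, ∏ i, g i x ∂μ = (∑ i, ∫ x, g i x ^ Fintype.card ι ∂μ) / Fintype.card ι) :
    ∀ᵐ x ∂μ, ∀ j k, g j x = g k x := by
  set defect : X → ℝ := fun x => (∑ i, g i x ^ Fintype.card ι) / Fintype.card ι - ∏ i, g i x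
  have hmean : Integrable (fun x => (∑ i, g i x ^ Fintype.card ι) / Fintype.card ι) μ :=
    (integrable_finsetSum _ fun i _ => hgn i).div_const _
  have hdefect_nonneg : 0 ≤ defect := fun x =>
    sub_nonneg.2 (Real.prod_le_sum_pow_card_div_card fun i => hg i x)
  have hdefect_integral : ∫ x, defect x ∂μ = 0 := by
    rw [integral_sub hmean hprod, integral_div, integral_finsetSum _ fun i _ => hgn i, heq,
      sub_self]
  have hdefect_ae : defect =ᵐ[μ] 0 :=
    (integral_eq_zero_iff_of_nonneg hdefect_nonneg (hmean.sub hprod)).1 hdefect_integral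
  filter_upwards [hdefect_ae] with x hx
  exact (Real.prod_eq_sum_pow_card_div_card_iff fun i => hg i x).1 (sub_eq_zero.1 hx).symm

theorem stmt_1_general {X : Type*} [MeasurableSpace X] (μ : Measure X)
    (n : ℕ) (hn : 0 < n) (ρ : Fin n → X → ℝ)
    (hpos : ∀ i x, 0 < ρ i x)
    (hLn : ∀ i, MemLp (ρ i) n μ)
    (hprod : Integrable (fun x => ∏ i, ρ i x) μ)
    (hintpos : ∀ i, 0 < ∫ x, (ρ i x) ^ n ∂μ)
    (heq : (∫ x, ∏ i, ρ i x ∂μ) ^ n = ∏ i, ∫ x, (ρ i x) ^ n ∂μ) :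
    ∀ i j, ∃ c : ℝ, 0 < c ∧ ρ i =ᵐ[μ] fun x => c * ρ j x := by
  have : Nonempty (Fin n) := Fin.pos_iff_nonempty.1 hn
  set c : Fin n → ℝ := fun i => (∫ x, ρ i x ^ n ∂μ) ^ (n⁻¹ : ℝ)
  have hc : ∀ i, 0 < c i := fun i => Real.rpow_pos_of_pos (hintpos i) _
  have hcn : ∀ i, c i ^ n = ∫ x, ρ i x ^ n ∂μ := fun i =>
    Real.rpow_inv_natCast_pow (hintpos i).le hn.ne'
  have hρn : ∀ i, Integrable (fun x => ρ i x ^ n) μ := fun i =>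
    ((hLn i).integrable_norm_pow hn.ne').congr
      (.of_forall fun x => by simp [abs_of_pos (hpos i x)])
  have hint_prod : ∫ x, ∏ i, ρ i x ∂μ = ∏ i, c i := by
    refine (pow_left_inj₀ (integral_nonneg fun x => prod_nonneg fun i _ => (hpos i x).le)
      (prod_nonneg fun i _ => (hc i).le) hn.ne').1 ?_
    rw [heq, ← prod_pow]
    simp only [hcn]
  have hnormalized := ae_forall_eq_of_integral_prod_eq_mean_integral_pow
    (g := fun i x => ρ i x / c i) (μ := μ) (fun i x => (div_pos (hpos i x) (hc i)).le)
    (by simpa [div_pow] using fun i => (hρn i).div_const (c i ^ n))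
    (by simpa [prod_div_distrib] using hprod.div_const (∏ i, c i))
    (by simp [div_pow, prod_div_distrib, integral_div, hcn, hint_prod, (hintpos _).ne',
      (prod_pos fun i _ => hc i).ne', hn.ne'])
  intro i j
  refine ⟨c i / c j, div_pos (hc i) (hc j), ?_⟩
  filter_upwards [hnormalized] with x hx
  rw [div_mul_eq_mul_div, eq_div_iff (hc j).ne', mul_comm (c i)]
  exact (div_eq_div_iff (hc i).ne' (hc j).ne').1 (hx i j)

/-- Equality case of the main inequality for dual mixed volumes: if the generalized
Hölder inequality is an equality, the functions are pairwise proportional a.e. -/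
theorem stmt_1 {X : Type*} [MeasurableSpace X] (μ : Measure X) [IsFiniteMeasure μ]
    (n : ℕ) (hn : 0 < n) (ρ : Fin n → X → ℝ)
    (hmeas : ∀ i, Measurable (ρ i))
    (hpos : ∀ i x, 0 < ρ i x)
    (hLn : ∀ i, MemLp (ρ i) n μ)
    (hprod : Integrable (fun x => ∏ i, ρ i x) μ)
    (hintpos : ∀ i, 0 < ∫ x, (ρ i x) ^ n ∂μ)
    (heq : (∫ x, ∏ i, ρ i x ∂μ) ^ n = ∏ i, ∫ x, (ρ i x) ^ n ∂μ) :
    ∀ i j, ∃ c : ℝ, 0 < c ∧ ρ i =ᵐ[μ] fun x => c * ρ j x :=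
  stmt_1_general μ n hn ρ hpos hLn hprod hintpos heq
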